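/- arXiv:2007.00942 — 6 statements merged into one kernel-verified Lean document; each statement's English description precedes it below -/
import Mathlib

section
/- Let X be a Banach space. Then there exists c₀ ∈ (0, 1) such that r_X(c₀) > 0 if and only if r_X(1) > 0. -/
open Filter Topology Metric NormedSpace ZeroAtInfty

/-- Opial's modulus of a Banach space `X` at `c`. -/
noncomputable def opialModulus (X : Type*) [NormedAddCommGroup X] [NormedSpace ℝ X] (c : ℝ) : ℝ :=
  sInf { r : ℝ | ∃ (x : X) (xs : ℕ → X), c ≤ ‖x‖ ∧
    (∀ f : X →L[ℝ] ℝ, Tendsto (fun n => f (xs n)) atTop (𝓝 0)) ∧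
    1 ≤ liminf (fun n => ‖xs n‖) atTop ∧
    r = liminf (fun n => ‖xs n - x‖) atTop - 1 }

namespace OpialAux

/-- The set of eventual lower bounds. -/
def low (u : ℕ → ℝ) : Set ℝ := {a | ∀ᶠ n in atTop, a ≤ u n}

lemma liminf_eq_sSup_low (u : ℕ → ℝ) : liminf u atTop = sSup (low u) := by
  rw [liminf_eq]; rfl

lemma zero_mem_low {u : ℕ → ℝ} (h0 : ∀ n, 0 ≤ u n) : (0:ℝ) ∈ low u :=
  Eventually.of_forall h0

lemma liminf_nonneg' {u : ℕ → ℝ} (h0 : ∀ n, 0 ≤ u n) : 0 ≤ liminf u atTop := by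
  rw [liminf_eq_sSup_low]
  by_cases hb : BddAbove (low u)
  · exact le_csSup hb (zero_mem_low h0)
  · rw [Real.sSup_of_not_bddAbove hb]

lemma bddAbove_low_of_liminf {u : ℕ → ℝ} (h : 1 ≤ liminf u atTop) : BddAbove (low u) := by
  by_contra hb
  rw [liminf_eq_sSup_low, Real.sSup_of_not_bddAbove hb] at h
  linarith

lemma liminf_mono' {u v : ℕ → ℝ} (h0 : ∀ n, 0 ≤ u n)
    (hb : BddAbove (low v)) (huv : ∀ n, u n ≤ v n) :
    liminf u atTop ≤ liminf v atTop := by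
  rw [liminf_eq_sSup_low, liminf_eq_sSup_low]
  refine csSup_le_csSup hb ⟨0, zero_mem_low h0⟩ ?_
  intro a ha
  filter_upwards [ha] with n hn
  exact hn.trans (huv n)

lemma bddAbove_low_scale {u : ℕ → ℝ} {c : ℝ} (hc : 0 < c) (hb : BddAbove (low u)) :
    BddAbove (low (fun n => c * u n)) := by
  obtain ⟨M, hM⟩ := hb
  refine ⟨c * M, fun b hbm => ?_⟩
  have hmem : b / c ∈ low u := by
    filter_upwards [hbm] with n hn
    exact (div_le_iff₀' hc).2 hn
  have := hM hmem
  calc b = c * (b / c) := by field_simp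
    _ ≤ c * M := by nlinarith
lemma bddAbove_low_shift {X : Type*} [NormedAddCommGroup X] (xs : ℕ → X) (x : X)
    (hb : BddAbove (low fun n => ‖xs n‖)) :
    BddAbove (low fun n => ‖xs n - x‖) := by
  obtain ⟨M, hM⟩ := hb
  refine ⟨M + ‖x‖, fun b hbm => ?_⟩
  have hmem : b - ‖x‖ ∈ low fun n => ‖xs n‖ := by
    filter_upwards [hbm] with n hn
    have := norm_sub_le (xs n) x
    linarith [norm_sub_le (xs n) x, hn]
  have := hM hmem
  linarith

lemma liminf_scale_le {u : ℕ → ℝ} {c : ℝ} (hc : 0 < c) (h0 : ∀ n, 0 ≤ u n)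
    (hb : BddAbove (low u)) :
    liminf (fun n => c * u n) atTop ≤ c * liminf u atTop := by
  rw [liminf_eq_sSup_low, liminf_eq_sSup_low]
  refine csSup_le ⟨0, zero_mem_low fun n => mul_nonneg hc.le (h0 n)⟩ ?_
  intro a ha
  have hmem : a / c ∈ low u := by
    filter_upwards [ha] with n hn
    exact (div_le_iff₀' hc).2 hn
  have h1 : a / c ≤ sSup (low u) := le_csSup hb hmem
  calc a = c * (a / c) := by field_simp
    _ ≤ c * sSup (low u) := by nlinarith

end OpialAux

open OpialAux

theorem stmt0 (X : Type*) [NormedAddCommGroup X] [NormedSpace ℝ X] [CompleteSpace X] :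
    (∃ c₀ ∈ Set.Ioo (0 : ℝ) 1, 0 < opialModulus X c₀) ↔ 0 < opialModulus X 1 := by
  set S : ℝ → Set ℝ := fun c => { r : ℝ | ∃ (x : X) (xs : ℕ → X), c ≤ ‖x‖ ∧
    (∀ f : X →L[ℝ] ℝ, Tendsto (fun n => f (xs n)) atTop (𝓝 0)) ∧
    1 ≤ liminf (fun n => ‖xs n‖) atTop ∧
    r = liminf (fun n => ‖xs n - x‖) atTop - 1 } with hS
  have hop : ∀ c, opialModulus X c = sInf (S c) := fun c => rfl
  -- every element of S c is ≥ -1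
  have hbdd : ∀ c, BddBelow (S c) := by
    intro c
    refine ⟨-1, fun r hr => ?_⟩
    obtain ⟨x, xs, -, -, -, hrL⟩ := hr
    have := liminf_nonneg' (u := fun n => ‖xs n - x‖) (fun n => norm_nonneg _)
    linarith
  -- scaling: from data for level c (0 < c ≤ 1) we get a member of S 1
  have hscale : ∀ (c : ℝ), 0 < c → c ≤ 1 → ∀ (x : X) (xs : ℕ → X),
      c ≤ ‖x‖ → (∀ f : X →L[ℝ] ℝ, Tendsto (fun n => f (xs n)) atTop (𝓝 0)) →
      1 ≤ liminf (fun n => ‖xs n‖) atTop →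
      (liminf (fun n => ‖(c⁻¹ • xs ·) n - c⁻¹ • x‖) atTop - 1) ∈ S 1 := by
    intro c hc hc1 x xs hx hf hl
    refine ⟨c⁻¹ • x, fun n => c⁻¹ • xs n, ?_, ?_, ?_, rfl⟩
    · rw [norm_smul, Real.norm_eq_abs, abs_of_pos (by positivity)]
      rw [← inv_mul_cancel₀ (ne_of_gt hc)]
      exact mul_le_mul_of_nonneg_left hx (by positivity)
    · intro f
      have := (hf f).const_mul c⁻¹
      simpa using this
    · have hbA : BddAbove (low fun n => ‖xs n‖) := bddAbove_low_of_liminf hl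
      have hbB : BddAbove (low fun n => c⁻¹ * ‖xs n‖) := bddAbove_low_scale (by positivity) hbA
      have heq : (fun n => ‖c⁻¹ • xs n‖) = fun n => c⁻¹ * ‖xs n‖ := by
        funext n; rw [norm_smul, Real.norm_eq_abs, abs_of_pos (by positivity)]
      calc (1:ℝ) ≤ liminf (fun n => ‖xs n‖) atTop := hl
        _ ≤ liminf (fun n => c⁻¹ * ‖xs n‖) atTop := by
            refine liminf_mono' (fun n => norm_nonneg _) hbB fun n => ?_
            have h1 : (1:ℝ) ≤ c⁻¹ := by nlinarith [inv_mul_cancel₀ (ne_of_gt hc), inv_nonneg.2 hc.le]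
            nlinarith [norm_nonneg (xs n)]
        _ = liminf (fun n => ‖c⁻¹ • xs n‖) atTop := by rw [heq]
  constructor
  · rintro ⟨c₀, ⟨hc0, hc1⟩, hpos⟩
    rw [hop] at hpos ⊢
    have hne : (S c₀).Nonempty := by
      by_contra h
      rw [Set.not_nonempty_iff_eq_empty] at h
      rw [h, Real.sInf_empty] at hpos
      exact lt_irrefl _ hpos
    obtain ⟨r, x, xs, hx, hf, hl, hr⟩ := hne
    have hS1 : (S 1).Nonempty :=
      ⟨_, hscale c₀ hc0 hc1.le x xs hx hf hl⟩
    refine lt_of_lt_of_le hpos (le_csInf hS1 ?_)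
    intro r hr1
    refine csInf_le (hbdd c₀) ?_
    obtain ⟨x, xs, hx, hf, hl, hrl⟩ := hr1
    exact ⟨x, xs, le_trans hc1.le hx, hf, hl, hrl⟩
  · intro hpos
    rw [hop] at hpos
    set r₁ := sInf (S 1) with hr₁
    have hS1ne : (S 1).Nonempty := by
      by_contra h
      rw [Set.not_nonempty_iff_eq_empty] at h
      rw [hr₁, h, Real.sInf_empty] at hpos
      exact lt_irrefl _ hpos
    have hr1pos : 0 < 1 + r₁ := by linarith
    set c₀ : ℝ := (1 + (1 + r₁)⁻¹) / 2 with hc₀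
    have hinv1 : (1 + r₁)⁻¹ < 1 := by
      rw [inv_lt_one_iff₀]; right; linarith
    have hinvpos : 0 < (1 + r₁)⁻¹ := by positivity
    have hc0pos : 0 < c₀ := by rw [hc₀]; linarith
    have hc0lt1 : c₀ < 1 := by rw [hc₀]; linarith
    have hkey : 1 < c₀ * (1 + r₁) := by
      have h2 : (1 + r₁)⁻¹ < c₀ := by rw [hc₀]; linarith
      have h3 : (1 + r₁)⁻¹ * (1 + r₁) = 1 := inv_mul_cancel₀ (ne_of_gt hr1pos)
      nlinarith
    refine ⟨c₀, ⟨hc0pos, hc0lt1⟩, ?_⟩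
    rw [hop]
    have hSc0ne : (S c₀).Nonempty := by
      obtain ⟨r, x, xs, hx, hf, hl, hrl⟩ := hS1ne
      exact ⟨r, x, xs, le_trans hc0lt1.le hx, hf, hl, hrl⟩
    refine lt_of_lt_of_le (show (0:ℝ) < c₀ * (1 + r₁) - 1 by linarith) (le_csInf hSc0ne ?_)
    rintro r ⟨x, xs, hx, hf, hl, hrl⟩
    -- scaled element of S 1
    have hmem := hscale c₀ hc0pos hc0lt1.le x xs hx hf hl
    have h1 : r₁ ≤ liminf (fun n => ‖(c₀⁻¹ • xs ·) n - c₀⁻¹ • x‖) atTop - 1 :=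
      csInf_le (hbdd 1) hmem
    have heq : (fun n => ‖(c₀⁻¹ • xs ·) n - c₀⁻¹ • x‖)
        = fun n => c₀⁻¹ * ‖xs n - x‖ := by
      funext n
      rw [show (c₀⁻¹ • xs ·) n - c₀⁻¹ • x = c₀⁻¹ • (xs n - x) by simp [smul_sub],
        norm_smul, Real.norm_eq_abs, abs_of_pos (by positivity)]
    rw [heq] at h1
    have hbA : BddAbove (low fun n => ‖xs n‖) := bddAbove_low_of_liminf hl
    have hbB : BddAbove (low fun n => ‖xs n - x‖) := bddAbove_low_shift xs x hbA
    have h2 : liminf (fun n => c₀⁻¹ * ‖xs n - x‖) atTop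
        ≤ c₀⁻¹ * liminf (fun n => ‖xs n - x‖) atTop :=
      liminf_scale_le (by positivity) (fun n => norm_nonneg _) hbB
    have h3 : r₁ ≤ c₀⁻¹ * liminf (fun n => ‖xs n - x‖) atTop - 1 := by linarith
    have h4 : c₀ * (1 + r₁) ≤ liminf (fun n => ‖xs n - x‖) atTop := by
      have h5 : c₀ * c₀⁻¹ = 1 := mul_inv_cancel₀ (ne_of_gt hc0pos)
      nlinarith [h3]
    linarith [hrl, h4]
end

section
/- Let X be a Banach space with r_X(1) > 0. If c satisfies 1 > c > 1/(r_X(1) + 1), then r_X(c) > 0. -/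
open Filter Topology Metric NormedSpace ZeroAtInfty

/-!
Normalizing a point `x` with `c ≤ ‖x‖ < 1` moves it by `1 - ‖x‖ ≤ 1 - c`, and moving the base
point changes `liminf ‖xₙ - x‖` by at most the distance moved. Hence
`r_X(c) ≥ r_X(1) - (1 - c)`, which is positive because `1 - r ≤ 1 / (r + 1)` for `r ≥ 0`.
-/

namespace Real

variable {α : Type*} {l : Filter α}

lemma liminf_nonneg {f : α → ℝ} (hf : ∀ a, 0 ≤ f a) : 0 ≤ liminf f l :=
  sSup_nonneg' ⟨0, .of_forall hf, le_rfl⟩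

lemma liminf_le_liminf_add_of_abs_sub_le [l.NeBot] {f g : α → ℝ} {d : ℝ}
    (hg : l.IsBoundedUnder (· ≥ ·) g) (hfg : ∀ a, |f a - g a| ≤ d) :
    liminf f l ≤ liminf g l + d := by
  have hle : ∀ a, f a ≤ g a + d := fun a => by linarith [(abs_le.mp (hfg a)).2]
  have hge : ∀ a, g a - d ≤ f a := fun a => by linarith [(abs_le.mp (hfg a)).1]
  by_cases hg_cobdd : l.IsCoboundedUnder (· ≥ ·) g
  · obtain ⟨b, hb⟩ := hg.eventually_ge
    obtain ⟨e, he⟩ := hg_cobdd.frequently_le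
    have hf : l.IsBoundedUnder (· ≥ ·) f :=
      isBoundedUnder_of_eventually_ge (a := b - d) (hb.mono fun a ha => by linarith [hge a])
    calc liminf f l ≤ liminf (fun a => g a + d) l :=
          liminf_le_liminf (.of_forall hle) hf
            (IsCoboundedUnder.of_frequently_le (a := e + d) (he.mono fun a ha => by linarith))
      _ = liminf g l + d := liminf_add_const l g d hg_cobdd hg
  · -- `g` tends to `+∞`, hence so does `f`, and both liminfs take the junk value `0`
    have hf_cobdd : ¬ l.IsCoboundedUnder (· ≥ ·) f := fun hf_cobdd => by
      obtain ⟨e, he⟩ := hf_cobdd.frequently_le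
      exact hg_cobdd (IsCoboundedUnder.of_frequently_le (a := e + d)
        (he.mono fun a ha => by linarith [hge a]))
    obtain ⟨a⟩ := l.nonempty_of_neBot
    rw [liminf_of_not_isCoboundedUnder hf_cobdd, liminf_of_not_isCoboundedUnder hg_cobdd]
    linarith [(abs_nonneg _).trans (hfg a)]

end Real

section NormedSpace

variable {E : Type*} [NormedAddCommGroup E]

lemma liminf_norm_sub_le_liminf_norm_sub_add {α : Type*} {l : Filter α} [l.NeBot]
    (u : α → E) (x y : E) :
    liminf (fun a => ‖u a - y‖) l ≤ liminf (fun a => ‖u a - x‖) l + ‖x - y‖ :=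
  Real.liminf_le_liminf_add_of_abs_sub_le (isBoundedUnder_of ⟨0, fun _ => norm_nonneg _⟩)
    fun a => by simpa using abs_norm_sub_norm_le (u a - y) (u a - x)

lemma norm_sub_inv_norm_smul_self [NormedSpace ℝ E] {x : E} (hx : x ≠ 0) :
    ‖x - ‖x‖⁻¹ • x‖ = |‖x‖ - 1| := by
  have hx' : ‖x‖ ≠ 0 := norm_ne_zero_iff.mpr hx
  have hsmul : x - ‖x‖⁻¹ • x = (1 - ‖x‖⁻¹) • x := by rw [sub_smul, one_smul]
  rw [hsmul, norm_smul, Real.norm_eq_abs, ← abs_norm x,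
    ← abs_mul, abs_norm, sub_mul, inv_mul_cancel₀ hx', one_mul, abs_sub_comm]

end NormedSpace

section Opial

def opialSet (X : Type*) [NormedAddCommGroup X] [NormedSpace ℝ X] (c : ℝ) : Set ℝ :=
  { r : ℝ | ∃ (x : X) (xs : ℕ → X), c ≤ ‖x‖ ∧
    (∀ f : X →L[ℝ] ℝ, Tendsto (fun n => f (xs n)) atTop (𝓝 0)) ∧
    1 ≤ liminf (fun n => ‖xs n‖) atTop ∧
    r = liminf (fun n => ‖xs n - x‖) atTop - 1 }

variable {X : Type*} [NormedAddCommGroup X] [NormedSpace ℝ X]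

lemma opialModulus_eq_sInf (c : ℝ) : opialModulus X c = sInf (opialSet X c) := rfl

lemma opialSet_anti : Antitone (opialSet X) := by
  rintro c c' hcc' r ⟨x, xs, hx, hweak, hxs, rfl⟩
  exact ⟨x, xs, hcc'.trans hx, hweak, hxs, rfl⟩

lemma bddBelow_opialSet (c : ℝ) : BddBelow (opialSet X c) := by
  refine ⟨-1, ?_⟩
  rintro r ⟨x, xs, -, -, -, rfl⟩
  linarith [Real.liminf_nonneg (l := atTop) fun n => norm_nonneg (xs n - x)]

lemma opialModulus_le_of_mem_opialSet {c r : ℝ} (hr : r ∈ opialSet X c) :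
    opialModulus X c ≤ r :=
  csInf_le (bddBelow_opialSet c) hr

lemma opialSet_nonempty_of_opialModulus_ne_zero {c : ℝ} (h : opialModulus X c ≠ 0) :
    (opialSet X c).Nonempty := by
  contrapose! h
  rw [opialModulus_eq_sInf, h, Real.sInf_empty]

lemma opialModulus_one_sub_le_of_mem_opialSet {c r : ℝ} (hc0 : 0 < c) (hc1 : c ≤ 1)
    (hr : r ∈ opialSet X c) : opialModulus X 1 - (1 - c) ≤ r := by
  obtain ⟨x, xs, hx, hweak, hxs, rfl⟩ := hr
  rcases le_or_gt 1 ‖x‖ with hx1 | hx1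
  · linarith [opialModulus_le_of_mem_opialSet ⟨x, xs, hx1, hweak, hxs, rfl⟩]
  · have hx0 : x ≠ 0 := norm_pos_iff.mp (hc0.trans_le hx)
    set x₁ := ‖x‖⁻¹ • x
    have hx₁ : ‖x₁‖ = 1 := norm_smul_inv_norm hx0
    have hdist : ‖x - x₁‖ = 1 - ‖x‖ := by
      rw [norm_sub_inv_norm_smul_self hx0, abs_of_neg (by linarith)]
      ring
    linarith [opialModulus_le_of_mem_opialSet ⟨x₁, xs, hx₁.ge, hweak, hxs, rfl⟩,
      liminf_norm_sub_le_liminf_norm_sub_add (l := atTop) xs x x₁]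

lemma opialModulus_one_sub_le {c : ℝ} (hc0 : 0 < c) (hc1 : c ≤ 1)
    (hne : (opialSet X 1).Nonempty) : opialModulus X 1 - (1 - c) ≤ opialModulus X c :=
  le_csInf (hne.mono (opialSet_anti hc1)) fun _ hr =>
    opialModulus_one_sub_le_of_mem_opialSet hc0 hc1 hr

end Opial

theorem stmt1_general (X : Type*) [NormedAddCommGroup X] [NormedSpace ℝ X]
    (hr : 0 < opialModulus X 1) (c : ℝ) (hc1 : c < 1)
    (hc2 : 1 / (opialModulus X 1 + 1) < c) :
    0 < opialModulus X c := by
  have hc0 : 0 < c := lt_trans (by positivity) hc2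
  have hpos : 0 < opialModulus X 1 - (1 - c) := by
    rw [div_lt_iff₀ (by linarith)] at hc2
    nlinarith
  exact hpos.trans_le
    (opialModulus_one_sub_le hc0 hc1.le (opialSet_nonempty_of_opialModulus_ne_zero hr.ne'))

theorem stmt1 (X : Type*) [NormedAddCommGroup X] [NormedSpace ℝ X] [CompleteSpace X]
    (hr : 0 < opialModulus X 1) (c : ℝ) (hc1 : c < 1)
    (hc2 : 1 / (opialModulus X 1 + 1) < c) :
    0 < opialModulus X c :=
  stmt1_general X hr c hc1 hc2
end

section
/- Let X be a Banach space whose dual satisfies r_{X*}(1) > 0. Suppose (w_n*) is a sequence in X* with ‖w_n*‖ = 1 for all n, w_n* weak*-converges to w* with w* ≠ 0, and liminf_{n→∞} ‖w_n* − w*‖ ≥ ‖w*‖. Then ‖w*‖ ≤ 1/(r_{X*}(1) + 1). -/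
open Filter Topology Metric NormedSpace ZeroAtInfty

private lemma liminf_nonneg' (g : ℕ → ℝ) (hg : ∀ n, 0 ≤ g n) : 0 ≤ liminf g atTop := by
  rw [liminf_eq]
  by_cases hb : BddAbove {a : ℝ | ∀ᶠ n in atTop, a ≤ g n}
  · exact le_csSup hb (Eventually.of_forall hg)
  · rw [csSup_of_not_bddAbove hb, Real.sSup_empty]

/-- The Opial modulus of the dual `X*`, computed with weak*-null sequences. -/
noncomputable def dualOpialModulus (X : Type*) [NormedAddCommGroup X] [NormedSpace ℝ X] (c : ℝ) : ℝ :=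
  sInf { r : ℝ | ∃ (x : X →L[ℝ] ℝ) (xs : ℕ → X →L[ℝ] ℝ), c ≤ ‖x‖ ∧
    (∀ v : X, Tendsto (fun n => xs n v) atTop (𝓝 0)) ∧
    1 ≤ liminf (fun n => ‖xs n‖) atTop ∧
    r = liminf (fun n => ‖xs n - x‖) atTop - 1 }

theorem stmt5 (X : Type*) [NormedAddCommGroup X] [NormedSpace ℝ X] [CompleteSpace X]
    (hr : 0 < dualOpialModulus X 1)
    (w : ℕ → X →L[ℝ] ℝ) (wstar : X →L[ℝ] ℝ)
    (hnorm : ∀ n, ‖w n‖ = 1)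
    (hconv : ∀ v : X, Tendsto (fun n => w n v) atTop (𝓝 (wstar v)))
    (hne : wstar ≠ 0)
    (hliminf : ‖wstar‖ ≤ liminf (fun n => ‖w n - wstar‖) atTop) :
    ‖wstar‖ ≤ 1 / (dualOpialModulus X 1 + 1) := by
  set a : ℝ := ‖wstar‖ with ha_def
  have ha : 0 < a := norm_pos_iff.mpr hne
  set S := { r : ℝ | ∃ (x : X →L[ℝ] ℝ) (xs : ℕ → X →L[ℝ] ℝ), (1:ℝ) ≤ ‖x‖ ∧
    (∀ v : X, Tendsto (fun n => xs n v) atTop (𝓝 0)) ∧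
    1 ≤ liminf (fun n => ‖xs n‖) atTop ∧
    r = liminf (fun n => ‖xs n - x‖) atTop - 1 } with hS
  have hbdd : BddBelow S := by
    refine ⟨-1, fun r hr => ?_⟩
    obtain ⟨x, xs, -, -, -, hreq⟩ := hr
    have h0 : 0 ≤ liminf (fun n => ‖xs n - x‖) atTop :=
      liminf_nonneg' _ fun n => norm_nonneg _
    linarith
  -- the witness
  set x : X →L[ℝ] ℝ := a⁻¹ • (-wstar) with hx
  set xs : ℕ → X →L[ℝ] ℝ := fun n => a⁻¹ • (w n - wstar) with hxs
  have hainv : (0:ℝ) < a⁻¹ := inv_pos.mpr ha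
  have hxnorm : ‖x‖ = 1 := by
    rw [hx, norm_smul a⁻¹ (-wstar), norm_neg, Real.norm_eq_abs, abs_of_pos hainv, ← ha_def]
    field_simp
  have hliminf2 : liminf (fun n => ‖xs n‖) atTop
      = a⁻¹ * liminf (fun n => ‖w n - wstar‖) atTop := by
    have hmono : Monotone (fun t : ℝ => a⁻¹ * t) :=
      fun s t hst => mul_le_mul_of_nonneg_left hst hainv.le
    have cobdd : IsCoboundedUnder (· ≥ ·) atTop (fun n : ℕ => ‖w n - wstar‖) :=
      Filter.IsBoundedUnder.isCoboundedUnder_ge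
        (isBoundedUnder_of ⟨1 + a, fun n => by
          calc ‖w n - wstar‖ ≤ ‖w n‖ + ‖wstar‖ := norm_sub_le _ _
          _ = 1 + a := by rw [hnorm n]⟩)
    have bddb : IsBoundedUnder (· ≥ ·) atTop (fun n : ℕ => ‖w n - wstar‖) :=
      isBoundedUnder_of ⟨0, fun n => norm_nonneg _⟩
    have key := Monotone.map_liminf_of_continuousAt (F := atTop) (f := fun t : ℝ => a⁻¹ * t)
      hmono (fun n : ℕ => ‖w n - wstar‖)
      ((continuous_const.mul continuous_id).continuousAt) cobdd bddb
    simp only [Function.comp_def] at key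
    rw [key]
    congr 1
    ext n
    rw [hxs]
    simp only
    rw [norm_smul a⁻¹ (w n - wstar), Real.norm_eq_abs, abs_of_pos hainv]
  have hmem : a⁻¹ - 1 ∈ S := by
    refine ⟨x, xs, hxnorm.ge, ?_, ?_, ?_⟩
    · intro v
      have : Tendsto (fun n => a⁻¹ * (w n v - wstar v)) atTop (𝓝 (a⁻¹ * (wstar v - wstar v))) :=
        (Tendsto.sub (hconv v) tendsto_const_nhds).const_mul _
      simpa [hxs] using this
    · rw [hliminf2]
      calc (1:ℝ) = a⁻¹ * a := by field_simp
      _ ≤ a⁻¹ * liminf (fun n => ‖w n - wstar‖) atTop :=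
        mul_le_mul_of_nonneg_left hliminf hainv.le
    · have hdiff : ∀ n, xs n - x = a⁻¹ • w n := by
        intro n
        rw [hxs, hx]
        simp only
        rw [smul_sub a⁻¹ (w n) wstar, smul_neg a⁻¹ wstar, sub_neg_eq_add, sub_add_cancel]
      have : (fun n => ‖xs n - x‖) = fun _ => a⁻¹ := by
        ext n
        rw [hdiff n, norm_smul a⁻¹ (w n), Real.norm_eq_abs, abs_of_pos hainv, hnorm n, mul_one]
      rw [this, liminf_const]
  have hle : dualOpialModulus X 1 ≤ a⁻¹ - 1 := csInf_le hbdd hmem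
  have hpos : 0 < dualOpialModulus X 1 + 1 := by linarith
  rw [le_div_iff₀ hpos]
  have : (dualOpialModulus X 1 + 1) * a ≤ a⁻¹ * a := by
    apply mul_le_mul_of_nonneg_right _ ha.le
    linarith
  rw [inv_mul_cancel₀ ha.ne'] at this
  linarith
end

section
/- Let X be a Banach space, t > 0, and let (w_n) be a sequence in X converging weakly to w ∈ X with limsup_{m→∞} limsup_{n→∞} ‖w_m − w_n‖ ≤ t and such that ‖w_n‖ converges. Let (w_n*) be a sequence in X* with ‖w_n*‖ = 1 and w_n*(w_n) = ‖w_n‖ for all n, weak*-converging to w* ∈ X*. Then |w*(w) − lim_{n→∞} ‖w_n‖| ≤ t. -/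
open Filter Topology Metric NormedSpace ZeroAtInfty

theorem stmt8 (X : Type*) [NormedAddCommGroup X] [NormedSpace ℝ X] [CompleteSpace X]
    (t : ℝ) (ht : 0 < t)
    (w : ℕ → X) (wlim : X)
    (hw : ∀ f : X →L[ℝ] ℝ, Tendsto (fun n => f (w n)) atTop (𝓝 (f wlim)))
    (hD : limsup (fun m => limsup (fun n => ‖w m - w n‖) atTop) atTop ≤ t)
    (L : ℝ) (hL : Tendsto (fun n => ‖w n‖) atTop (𝓝 L))
    (ws : ℕ → X →L[ℝ] ℝ)
    (hnorm : ∀ n, ‖ws n‖ = 1)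
    (hdual : ∀ n, ws n (w n) = ‖w n‖)
    (wstar : X →L[ℝ] ℝ)
    (hconv : ∀ v : X, Tendsto (fun n => ws n v) atTop (𝓝 (wstar v))) :
    |wstar wlim - L| ≤ t := by
  obtain ⟨C, hC⟩ := hL.bddAbove_range
  have hC' : ∀ n, ‖w n‖ ≤ C := fun n => hC ⟨n, rfl⟩
  set D : ℕ → ℝ := fun m => limsup (fun n => ‖w m - w n‖) atTop with hDdef
  set c : ℕ → ℝ := fun m => |‖w m‖ - ws m wlim| with hcdef
  -- step 1: c m ≤ D m
  have step1 : ∀ m, c m ≤ D m := by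
    intro m
    have h1 : Tendsto (fun n => |ws m (w m) - ws m (w n)|) atTop (𝓝 (c m)) := by
      have := ((hw (ws m)).const_sub (ws m (w m))).abs
      simpa [hdual m] using this
    have hb : IsBoundedUnder (· ≤ ·) atTop (fun n => ‖w m - w n‖) :=
      Filter.isBoundedUnder_of ⟨‖w m‖ + C, fun n =>
        (norm_sub_le _ _).trans (by linarith [hC' n])⟩
    have hle : ∀ n, |ws m (w m) - ws m (w n)| ≤ ‖w m - w n‖ := by
      intro n
      have := (ws m).le_opNorm (w m - w n)
      rw [hnorm m, one_mul] at this
      simpa [map_sub] using this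
    calc c m = limsup (fun n => |ws m (w m) - ws m (w n)|) atTop := h1.limsup_eq.symm
      _ ≤ D m := limsup_le_limsup (Filter.Eventually.of_forall hle)
          h1.isCoboundedUnder_le hb
  -- step 2: c tends to |L - wstar wlim|
  have step2 : Tendsto c atTop (𝓝 |L - wstar wlim|) := (hL.sub (hconv wlim)).abs
  -- step 3
  have hDb : IsBoundedUnder (· ≤ ·) atTop D := by
    refine Filter.isBoundedUnder_of ⟨2 * C, fun m => ?_⟩
    have : ∀ n, ‖w m - w n‖ ≤ 2 * C := fun n =>
      (norm_sub_le _ _).trans (by linarith [hC' n, hC' m])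
    refine limsup_le_of_le ?_ (Filter.Eventually.of_forall this)
    exact (Filter.isBoundedUnder_of (⟨0, fun n => norm_nonneg _⟩ : ∃ b, ∀ n, b ≤ ‖w m - w n‖) : IsBoundedUnder (· ≥ ·) atTop _).isCoboundedUnder_le
  have : |L - wstar wlim| ≤ t := by
    calc |L - wstar wlim| = limsup c atTop := step2.limsup_eq.symm
      _ ≤ limsup D atTop := limsup_le_limsup (Filter.Eventually.of_forall step1)
          step2.isCoboundedUnder_le hDb
      _ ≤ t := hD
  rwa [abs_sub_comm]
end

section
/- Let X be a separable Banach space whose dual satisfies r_{X*}(1) > 0. Then R(X) ≤ 1 + 1/(r_{X*}(1) + 1) < 2. -/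
open Filter Topology Metric NormedSpace ZeroAtInfty

/-- García-Falset's coefficient `R(X)`. -/
noncomputable def garciaFalsetR (X : Type*) [NormedAddCommGroup X] [NormedSpace ℝ X] : ℝ :=
  sSup { r : ℝ | ∃ (xs : ℕ → X) (x : X), (∀ n, ‖xs n‖ ≤ 1) ∧ ‖x‖ ≤ 1 ∧
    (∀ f : X →L[ℝ] ℝ, Tendsto (fun n => f (xs n)) atTop (𝓝 0)) ∧
    r = liminf (fun n => ‖xs n + x‖) atTop }

/-- liminf along a subsequence dominates the liminf, for bounded nonnegative sequences. -/
private lemma liminf_le_liminf_subseq {u : ℕ → ℝ} {σ : ℕ → ℕ} (hσ : StrictMono σ)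
    (h0 : ∀ n, 0 ≤ u n) (h2 : ∀ n, u n ≤ 2) :
    liminf u atTop ≤ liminf (fun k => u (σ k)) atTop := by
  have hmap : map σ atTop ≤ (atTop : Filter ℕ) := hσ.tendsto_atTop
  haveI : (map σ (atTop : Filter ℕ)).NeBot := map_neBot
  have hbb : (atTop : Filter ℕ).IsBoundedUnder (· ≥ ·) u :=
    isBoundedUnder_of ⟨0, fun n => h0 n⟩
  have hcb : (map σ (atTop : Filter ℕ)).IsCoboundedUnder (· ≥ ·) u :=
    (isBoundedUnder_of ⟨2, fun n => h2 n⟩ :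
      (map σ (atTop : Filter ℕ)).IsBoundedUnder (· ≤ ·) u).isCoboundedUnder_ge
  have := liminf_le_liminf_of_le hmap hbb hcb
  rwa [show liminf u (map σ atTop) = liminf (fun k => u (σ k)) atTop by
    simp only [liminf, map_map]; rfl] at this

private lemma clm_apply_le {X : Type*} [NormedAddCommGroup X] [NormedSpace ℝ X]
    (g : X →L[ℝ] ℝ) (v : X) : g v ≤ ‖g‖ * ‖v‖ :=
  (le_abs_self _).trans (by rw [← Real.norm_eq_abs]; exact g.le_opNorm v)

/-- From a norm-bounded sequence of functionals on a separable space, extract a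
weak*-convergent subsequence. -/
private lemma exists_weakstar_subseq {X : Type*} [NormedAddCommGroup X] [NormedSpace ℝ X]
    [CompleteSpace X] [TopologicalSpace.SeparableSpace X] [Nontrivial X]
    (f : ℕ → X →L[ℝ] ℝ) (hf : ∀ n, ‖f n‖ ≤ 1) :
    ∃ (σ : ℕ → ℕ) (g : X →L[ℝ] ℝ), StrictMono σ ∧
      ∀ v : X, Tendsto (fun k => f (σ k) v) atTop (𝓝 (g v)) := by
  haveI : Nonempty X := ⟨0⟩
  set u : ℕ → X := TopologicalSpace.denseSeq X with hu
  have hdense : DenseRange u := TopologicalSpace.denseRange_denseSeq X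
  set K : Set (ℕ → ℝ) := Set.univ.pi fun i => Set.Icc (-‖u i‖) ‖u i‖ with hK
  have hKc : IsCompact K := isCompact_univ_pi fun i => isCompact_Icc
  have hmem : ∀ n, (fun i => f n (u i)) ∈ K := by
    intro n
    refine Set.mem_univ_pi.2 fun i => ?_
    have h1 : |f n (u i)| ≤ ‖u i‖ := by
      calc |f n (u i)| = ‖f n (u i)‖ := rfl
        _ ≤ ‖f n‖ * ‖u i‖ := (f n).le_opNorm _
        _ ≤ 1 * ‖u i‖ := mul_le_mul_of_nonneg_right (hf n) (norm_nonneg _)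
        _ = ‖u i‖ := one_mul _
    exact abs_le.1 h1
  obtain ⟨g0, -, σ, hσ, hconv⟩ := hKc.tendsto_subseq hmem
  have hpt : ∀ i, Tendsto (fun k => f (σ k) (u i)) atTop (𝓝 (g0 i)) := by
    intro i
    exact (tendsto_pi_nhds.1 hconv) i
  have hcauchy : ∀ v : X, CauchySeq fun k => f (σ k) v := by
    intro v
    rw [Metric.cauchySeq_iff]
    intro ε hε
    obtain ⟨i, hi⟩ := hdense.exists_dist_lt v (show (0:ℝ) < ε/4 by linarith)
    rw [dist_eq_norm] at hi
    obtain ⟨N, hN⟩ := Metric.cauchySeq_iff.1 (hpt i).cauchySeq (ε/4) (by linarith)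
    refine ⟨N, fun a ha b hb => ?_⟩
    have key : ∀ n : ℕ, ‖f (σ n) v - f (σ n) (u i)‖ ≤ ε/4 := by
      intro n
      calc ‖f (σ n) v - f (σ n) (u i)‖ = ‖f (σ n) (v - u i)‖ := by rw [map_sub]
        _ ≤ ‖f (σ n)‖ * ‖v - u i‖ := (f (σ n)).le_opNorm _
        _ ≤ 1 * ‖v - u i‖ := mul_le_mul_of_nonneg_right (hf _) (norm_nonneg _)
        _ ≤ ε/4 := by rw [one_mul]; linarith
    have hmid := hN a ha b hb
    rw [dist_eq_norm] at hmid ⊢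
    calc ‖f (σ a) v - f (σ b) v‖
        = ‖(f (σ a) v - f (σ a) (u i)) + (f (σ a) (u i) - f (σ b) (u i))
            + (f (σ b) (u i) - f (σ b) v)‖ := by ring_nf
      _ ≤ ‖(f (σ a) v - f (σ a) (u i)) + (f (σ a) (u i) - f (σ b) (u i))‖
            + ‖f (σ b) (u i) - f (σ b) v‖ := norm_add_le _ _
      _ ≤ ‖f (σ a) v - f (σ a) (u i)‖ + ‖f (σ a) (u i) - f (σ b) (u i)‖
            + ‖f (σ b) (u i) - f (σ b) v‖ := by
          have := norm_add_le (f (σ a) v - f (σ a) (u i)) (f (σ a) (u i) - f (σ b) (u i))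
          linarith
      _ < ε := by
          have h1 := key a
          have h3 := key b
          have h3' : ‖f (σ b) (u i) - f (σ b) v‖ ≤ ε/4 := by
            rw [norm_sub_rev]; exact h3
          linarith
  set φ : X → ℝ := fun v => limUnder atTop fun k => f (σ k) v with hφdef
  have hφ : ∀ v : X, Tendsto (fun k => f (σ k) v) atTop (𝓝 (φ v)) :=
    fun v => (hcauchy v).tendsto_limUnder
  have htends : Tendsto (fun k (x : X) => f (σ k) x) atTop (𝓝 φ) :=
    tendsto_pi_nhds.2 hφ
  exact ⟨σ, continuousLinearMapOfTendsto (fun k => f (σ k)) htends, hσ, fun v => hφ v⟩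

theorem stmt9 (X : Type*) [NormedAddCommGroup X] [NormedSpace ℝ X] [CompleteSpace X] [TopologicalSpace.SeparableSpace X]
    (hr : 0 < dualOpialModulus X 1) :
    garciaFalsetR X ≤ 1 + 1 / (dualOpialModulus X 1 + 1) ∧
      1 + 1 / (dualOpialModulus X 1 + 1) < 2 := by
  set ρ := dualOpialModulus X 1 with hρdef
  set S : Set ℝ := { r : ℝ | ∃ (x : X →L[ℝ] ℝ) (xs : ℕ → X →L[ℝ] ℝ), 1 ≤ ‖x‖ ∧
    (∀ v : X, Tendsto (fun n => xs n v) atTop (𝓝 0)) ∧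
    1 ≤ liminf (fun n => ‖xs n‖) atTop ∧
    r = liminf (fun n => ‖xs n - x‖) atTop - 1 } with hSdef
  have hρS : ρ = sInf S := rfl
  have hm : 0 < 1 / (ρ + 1) := by positivity
  have hm1 : 1 / (ρ + 1) < 1 := by
    rw [div_lt_one (by linarith)]; linarith
  constructor
  · -- main inequality
    have hbdd : BddBelow S := by
      by_contra h
      have h0 := Real.sInf_of_not_bddBelow h
      rw [hρS, h0] at hr; exact lt_irrefl 0 hr
    have hne : S.Nonempty := by
      by_contra h
      rw [Set.not_nonempty_iff_eq_empty] at h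
      rw [hρS, h, Real.sInf_empty] at hr; exact lt_irrefl 0 hr
    have key : ∀ (g : X →L[ℝ] ℝ) (gs : ℕ → X →L[ℝ] ℝ), 1 ≤ ‖g‖ →
        (∀ v : X, Tendsto (fun n => gs n v) atTop (𝓝 0)) →
        1 ≤ liminf (fun n => ‖gs n‖) atTop →
        1 + ρ ≤ liminf (fun n => ‖gs n - g‖) atTop := by
      intro g gs h1 h2 h3
      have hmem : liminf (fun n => ‖gs n - g‖) atTop - 1 ∈ S := ⟨g, gs, h1, h2, h3, rfl⟩
      have h4 := csInf_le hbdd hmem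
      rw [← hρS] at h4; linarith
    haveI hnontriv : Nontrivial X := by
      obtain ⟨r0, g, gs, hg1, -, -, -⟩ := hne
      by_contra hnt
      rw [not_nontrivial_iff_subsingleton] at hnt
      have hg0 : g = 0 := by
        ext v
        have hv : v = 0 := Subsingleton.elim _ _
        simp [hv]
      rw [hg0] at hg1; simp at hg1; linarith
    apply Real.sSup_le
    · rintro r ⟨xs, x, hxs, hx, hweak, rfl⟩
      -- norming functionals
      have hexists : ∀ n, ∃ gn : X →L[ℝ] ℝ, ‖gn‖ = 1 ∧ gn (xs n + x) = ‖xs n + x‖ := by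
        intro n
        obtain ⟨g, hg1, hg2⟩ := exists_dual_vector' ℝ (xs n + x)
        exact ⟨g, hg1, by simpa using hg2⟩
      choose f hf1 hf2 using hexists
      obtain ⟨s0, gl, hs0, hgl⟩ := exists_weakstar_subseq f fun n => le_of_eq (hf1 n)
      have hsub : ∀ k, ‖f (s0 k) - gl‖ ∈ Set.Icc (0:ℝ) (1 + ‖gl‖) := fun k =>
        ⟨norm_nonneg _, by
          calc ‖f (s0 k) - gl‖ ≤ ‖f (s0 k)‖ + ‖gl‖ := norm_sub_le _ _
            _ = 1 + ‖gl‖ := by rw [hf1]⟩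
      obtain ⟨ℓ, hℓmem, s1, hs1, hnormconv⟩ := isCompact_Icc.tendsto_subseq hsub
      set σ : ℕ → ℕ := s0 ∘ s1 with hσdef
      have hσ : StrictMono σ := hs0.comp hs1
      have hpt : ∀ v : X, Tendsto (fun k => f (σ k) v) atTop (𝓝 (gl v)) :=
        fun v => (hgl v).comp hs1.tendsto_atTop
      have hnorm : Tendsto (fun k => ‖f (σ k) - gl‖) atTop (𝓝 ℓ) := hnormconv
      have hℓ0 : (0:ℝ) ≤ ℓ := hℓmem.1
      have ha1 : gl x ≤ 1 := by
        apply le_of_tendsto (hpt x)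
        filter_upwards with k
        calc f (σ k) x ≤ ‖f (σ k)‖ * ‖x‖ := clm_apply_le _ _
          _ ≤ 1 * 1 := mul_le_mul (le_of_eq (hf1 _)) hx (norm_nonneg _) zero_le_one
          _ = 1 := one_mul 1
      have ha2 : gl x ≤ ‖gl‖ := by
        calc gl x ≤ ‖gl‖ * ‖x‖ := clm_apply_le _ _
          _ ≤ ‖gl‖ * 1 := mul_le_mul_of_nonneg_left hx (norm_nonneg _)
          _ = ‖gl‖ := mul_one _
      have hstep1 : liminf (fun n => ‖xs n + x‖) atTop ≤
          liminf (fun k => ‖xs (σ k) + x‖) atTop :=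
        liminf_le_liminf_subseq hσ (fun n => norm_nonneg _) (fun n => by
          calc ‖xs n + x‖ ≤ ‖xs n‖ + ‖x‖ := norm_add_le _ _
            _ ≤ 1 + 1 := add_le_add (hxs n) hx
            _ = 2 := by norm_num)
      have hAeq : ∀ k, ‖xs (σ k) + x‖ = f (σ k) (xs (σ k)) + f (σ k) x := fun k => by
        rw [← hf2 (σ k), map_add]
      have hA0 : (atTop : Filter ℕ).IsBoundedUnder (· ≥ ·) fun k => ‖xs (σ k) + x‖ :=
        isBoundedUnder_of ⟨0, fun k => norm_nonneg _⟩
      have hest1 : liminf (fun k => ‖xs (σ k) + x‖) atTop ≤ 1 + gl x := by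
        have hB : Tendsto (fun k => 1 + f (σ k) x) atTop (𝓝 (1 + gl x)) :=
          tendsto_const_nhds.add (hpt x)
        have hle : ∀ k, ‖xs (σ k) + x‖ ≤ 1 + f (σ k) x := by
          intro k
          rw [hAeq k]
          have h5 : f (σ k) (xs (σ k)) ≤ 1 := by
            calc f (σ k) (xs (σ k)) ≤ ‖f (σ k)‖ * ‖xs (σ k)‖ := clm_apply_le _ _
              _ ≤ 1 * 1 := mul_le_mul (le_of_eq (hf1 _)) (hxs _) (norm_nonneg _) zero_le_one
              _ = 1 := one_mul 1
          linarith
        calc liminf (fun k => ‖xs (σ k) + x‖) atTop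
            ≤ liminf (fun k => 1 + f (σ k) x) atTop :=
              liminf_le_liminf (Eventually.of_forall hle) hA0
                hB.isBoundedUnder_le.isCoboundedUnder_ge
          _ = 1 + gl x := hB.liminf_eq
      have hest2 : liminf (fun k => ‖xs (σ k) + x‖) atTop ≤ ℓ + gl x := by
        have hC : Tendsto (fun k => ‖f (σ k) - gl‖ + gl (xs (σ k)) + f (σ k) x) atTop
            (𝓝 (ℓ + 0 + gl x)) :=
          (hnorm.add ((hweak gl).comp hσ.tendsto_atTop)).add (hpt x)
        have hle : ∀ k, ‖xs (σ k) + x‖ ≤ ‖f (σ k) - gl‖ + gl (xs (σ k)) + f (σ k) x := by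
          intro k
          rw [hAeq k]
          have h5 : f (σ k) (xs (σ k)) - gl (xs (σ k)) ≤ ‖f (σ k) - gl‖ := by
            calc f (σ k) (xs (σ k)) - gl (xs (σ k)) = (f (σ k) - gl) (xs (σ k)) := by
                  simp [ContinuousLinearMap.sub_apply]
              _ ≤ ‖f (σ k) - gl‖ * ‖xs (σ k)‖ := clm_apply_le _ _
              _ ≤ ‖f (σ k) - gl‖ * 1 := mul_le_mul_of_nonneg_left (hxs _) (norm_nonneg _)
              _ = _ := mul_one _
          linarith
        calc liminf (fun k => ‖xs (σ k) + x‖) atTop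
            ≤ liminf (fun k => ‖f (σ k) - gl‖ + gl (xs (σ k)) + f (σ k) x) atTop :=
              liminf_le_liminf (Eventually.of_forall hle) hA0
                hC.isBoundedUnder_le.isCoboundedUnder_ge
          _ = ℓ + 0 + gl x := hC.liminf_eq
          _ = ℓ + gl x := by ring
      by_cases hc1 : ‖gl‖ ≤ 1 / (ρ + 1)
      · calc liminf (fun n => ‖xs n + x‖) atTop ≤ 1 + gl x := hstep1.trans hest1
          _ ≤ 1 + 1 / (ρ + 1) := by linarith
      by_cases hc2 : ℓ ≤ 1 / (ρ + 1)
      · calc liminf (fun n => ‖xs n + x‖) atTop ≤ ℓ + gl x := hstep1.trans hest2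
          _ ≤ 1 + 1 / (ρ + 1) := by linarith
      · exfalso
        push_neg at hc1 hc2
        set t := min ℓ ‖gl‖ with htdef
        have htm : 1 / (ρ + 1) < t := lt_min hc2 hc1
        have ht0 : 0 < t := lt_trans hm htm
        have htℓ : t ≤ ℓ := min_le_left _ _
        have htg : t ≤ ‖gl‖ := min_le_right _ _
        have h1 : 1 ≤ ‖-(t⁻¹ • gl)‖ := by
          rw [norm_neg, norm_smul t⁻¹ gl, norm_inv, Real.norm_eq_abs, abs_of_pos ht0]
          have h6 : t⁻¹ * t ≤ t⁻¹ * ‖gl‖ :=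
            mul_le_mul_of_nonneg_left htg (inv_nonneg.2 ht0.le)
          rwa [inv_mul_cancel₀ ht0.ne'] at h6
        have h2 : ∀ v : X, Tendsto (fun k => (t⁻¹ • (f (σ k) - gl)) v) atTop (𝓝 0) := by
          intro v
          have h7 : Tendsto (fun k => f (σ k) v - gl v) atTop (𝓝 (gl v - gl v)) :=
            (hpt v).sub tendsto_const_nhds
          rw [sub_self] at h7
          have h8 := h7.const_mul t⁻¹
          rw [mul_zero] at h8
          have h9 : (fun k => (t⁻¹ • (f (σ k) - gl)) v) =
              fun k => t⁻¹ * (f (σ k) v - gl v) := by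
            funext k
            simp [ContinuousLinearMap.smul_apply, ContinuousLinearMap.sub_apply, smul_eq_mul]
          rw [h9]
          exact h8
        have hnorm' : Tendsto (fun k => ‖t⁻¹ • (f (σ k) - gl)‖) atTop (𝓝 (t⁻¹ * ℓ)) := by
          have h9 : (fun k => ‖t⁻¹ • (f (σ k) - gl)‖) =
              fun k => t⁻¹ * ‖f (σ k) - gl‖ := by
            funext k
            rw [norm_smul t⁻¹ (f (σ k) - gl), norm_inv, Real.norm_eq_abs, abs_of_pos ht0]
          rw [h9]
          exact hnorm.const_mul t⁻¹
        have h3 : 1 ≤ liminf (fun k => ‖t⁻¹ • (f (σ k) - gl)‖) atTop := by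
          rw [hnorm'.liminf_eq]
          have h6 : t⁻¹ * t ≤ t⁻¹ * ℓ := mul_le_mul_of_nonneg_left htℓ (inv_nonneg.2 ht0.le)
          rwa [inv_mul_cancel₀ ht0.ne'] at h6
        have hkey := key (-(t⁻¹ • gl)) (fun k => t⁻¹ • (f (σ k) - gl)) h1 h2 h3
        have heqc : liminf (fun k => ‖t⁻¹ • (f (σ k) - gl) - -(t⁻¹ • gl)‖) atTop = t⁻¹ := by
          have h9 : (fun k => ‖t⁻¹ • (f (σ k) - gl) - -(t⁻¹ • gl)‖) = fun _ => t⁻¹ := by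
            funext k
            have h10 : t⁻¹ • (f (σ k) - gl) - -(t⁻¹ • gl) = t⁻¹ • f (σ k) := by
              rw [smul_sub, sub_neg_eq_add]; abel
            rw [h10, norm_smul t⁻¹ (f (σ k)), hf1, norm_inv, Real.norm_eq_abs, abs_of_pos ht0, mul_one]
          rw [h9]
          exact liminf_const _
        rw [heqc] at hkey
        have h11 : t * (1 + ρ) ≤ 1 := by
          have h12 := mul_le_mul_of_nonneg_left hkey ht0.le
          rwa [mul_inv_cancel₀ ht0.ne'] at h12
        have h13 : t ≤ 1 / (ρ + 1) := by
          rw [le_div_iff₀ (show (0:ℝ) < ρ + 1 by linarith)]; linarith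
        linarith
    · linarith
  · linarith
end

section
/- Let X be a Banach space whose dual X* has Property(K*). Then c₀ does not embed isomorphically into X*, i.e., there is no closed subspace of X* isomorphic (as a topological vector space, via a bounded linear bijection with bounded inverse) to the space c₀ of real sequences converging to 0 with the supremum norm. -/
/-
James' argument that `c₀` is not distortable, run inside `X*`. Let `fᵢ ∈ X*` be the images of
the unit vectors of `c₀`: the blocks `∑_{A ≤ i < B} cᵢ fᵢ` with `|cᵢ| ≤ 1` are uniformly bounded,
so `∑ |fᵢ v|` converges for every `v` and blocks far out are weak*-small. Let `ρ A` (`blockSup`)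
be the supremum of the norms of blocks starting at `A` and `r = inf ρ > 0`. Choose `N` with
`ρ N < (1 + η) r` and consecutive blocks `yⱼ` after `N` with `‖yⱼ‖ ≥ (1 - η) r`. Any combination
`∑ βⱼ yⱼ` with `|βⱼ| ≤ b` is `b` times a block starting at `N`, so for `uⱼ = yⱼ / ‖yⱼ‖` and
`t = (1 - η) r / ρ N ≥ 1/2` we get `‖u_k - t ∑_{j ≤ m} uⱼ‖ ≤ 1` whenever `k ≤ m`.
By Banach–Alaoglu the partial sums have a weak* cluster point `w`, and `‖u_k - t w‖ ≤ 1` for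
all `k`; the `u_k` have norm one and are weak*-null, so Property(K*) yields `‖t w‖ ≤ K`.
Skipping blocks so that all but the first are negligible at a vector `v₀` norming `u₀` gives
`w v₀ ≥ 1 - 2η`, hence `(1 - η)(1 - 2η) ≤ (1 + η) K`, which is false for small `η`.
-/

open Filter Topology Metric NormedSpace ZeroAtInfty

/-- The dual `X*` has Property(K*). -/
def PropertyKStar (X : Type*) [NormedAddCommGroup X] [NormedSpace ℝ X] : Prop :=
  ∃ K : ℝ, 0 ≤ K ∧ K < 1 ∧
    ∀ (xs : ℕ → X →L[ℝ] ℝ) (x : X →L[ℝ] ℝ),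
      (∀ n, ‖xs n‖ ≤ 1) →
      (∀ v : X, Tendsto (fun n => xs n v) atTop (𝓝 0)) →
      Tendsto (fun n => ‖xs n‖) atTop (𝓝 1) →
      liminf (fun n => ‖xs n - x‖) atTop ≤ 1 →
      ‖x‖ ≤ K

open Finset

section Blocks

variable {E : Type*} [NormedAddCommGroup E] [NormedSpace ℝ E] {f : ℕ → E} {C lam : ℝ}
  {M : ℕ → ℕ}

def IsBlock (f : ℕ → E) (A B : ℕ) (y : E) : Prop :=
  ∃ c : ℕ → ℝ, (∀ i, |c i| ≤ 1) ∧ y = ∑ i ∈ Ico A B, c i • f i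

lemma isBlock_zero (A B : ℕ) : IsBlock f A B 0 :=
  ⟨0, by simp, by simp⟩

lemma isBlock_single (A : ℕ) : IsBlock f A (A + 1) (f A) :=
  ⟨1, by simp, by simp⟩

lemma IsBlock.smul {A B : ℕ} {y : E} {β : ℝ} (h : IsBlock f A B y) (hβ : |β| ≤ 1) :
    IsBlock f A B (β • y) := by
  obtain ⟨c, hc, rfl⟩ := h
  refine ⟨fun i => β * c i, fun i => ?_, by simp only [smul_sum, mul_smul]⟩
  rw [abs_mul]
  exact mul_le_one₀ hβ (abs_nonneg _) (hc i)

lemma IsBlock.add {A B D : ℕ} {y y' : E} (h : IsBlock f A B y) (h' : IsBlock f B D y')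
    (hAB : A ≤ B) (hBD : B ≤ D) : IsBlock f A D (y + y') := by
  obtain ⟨c, hc, rfl⟩ := h
  obtain ⟨c', hc', rfl⟩ := h'
  refine ⟨fun i => if i < B then c i else c' i, fun i => ?_, ?_⟩
  · dsimp only
    split_ifs
    exacts [hc i, hc' i]
  · rw [← sum_Ico_consecutive _ hAB hBD]
    congr 1 <;> refine sum_congr rfl fun i hi => ?_ <;> simp only [mem_Ico] at hi
    · simp only [if_pos hi.2]
    · simp only [if_neg (not_lt.2 hi.1)]

lemma IsBlock.mono_right {A B B' : ℕ} {y : E} (h : IsBlock f A B y) (hB : B ≤ B') :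
    IsBlock f A B' y := by
  obtain ⟨c, hc, rfl⟩ := h
  refine ⟨fun i => if i < B then c i else 0, fun i => ?_, ?_⟩
  · dsimp only
    split_ifs
    exacts [hc i, by simp]
  · simp only [ite_smul, zero_smul, ← sum_filter]
    congr 1
    ext i
    simp only [mem_filter, mem_Ico]
    omega

lemma isBlock_sum {y : ℕ → E} {β : ℕ → ℝ} (hM : Monotone M)
    (hy : ∀ j, IsBlock f (M j) (M (j + 1)) (y j)) (hβ : ∀ j, |β j| ≤ 1) (m : ℕ) :
    IsBlock f (M 0) (M m) (∑ j ∈ range m, β j • y j) := by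
  induction m with
  | zero => simpa using isBlock_zero (M 0) (M 0)
  | succ m ih =>
    rw [sum_range_succ]
    exact ih.add ((hy m).smul (hβ m)) (hM m.zero_le) (hM m.le_succ)

def BlocksBounded (f : ℕ → E) (C : ℝ) : Prop :=
  ∀ A B y, IsBlock f A B y → ‖y‖ ≤ C

noncomputable def blockSup (f : ℕ → E) (A : ℕ) : ℝ :=
  sSup (norm '' {y | ∃ B, IsBlock f A B y})

lemma IsBlock.norm_le_blockSup (hC : BlocksBounded f C) {A B : ℕ} {y : E}
    (h : IsBlock f A B y) : ‖y‖ ≤ blockSup f A :=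
  le_csSup ⟨C, by rintro _ ⟨y, ⟨B, hy⟩, rfl⟩; exact hC A B y hy⟩ ⟨y, ⟨B, h⟩, rfl⟩

lemma exists_isBlock_lt_norm {A : ℕ} {x : ℝ} (hx : x < blockSup f A) :
    ∃ B y, IsBlock f A B y ∧ x < ‖y‖ := by
  have hne : (norm '' {y : E | ∃ B, IsBlock f A B y}).Nonempty :=
    ⟨0, 0, ⟨A, isBlock_zero A A⟩, norm_zero⟩
  obtain ⟨_, ⟨y, ⟨B, hy⟩, rfl⟩, hxy⟩ := exists_lt_of_lt_csSup hne hx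
  exact ⟨B, y, hy, hxy⟩

structure IsBlockSeq (f : ℕ → E) (lam : ℝ) (M : ℕ → ℕ) (y : ℕ → E) : Prop where
  strictMono : StrictMono M
  isBlock : ∀ j, IsBlock f (M j) (M (j + 1)) (y j)
  le_norm : ∀ j, lam ≤ ‖y j‖

lemma IsBlockSeq.comp {y : ℕ → E} (h : IsBlockSeq f lam M y) {φ : ℕ → ℕ} (hφ : StrictMono φ) :
    IsBlockSeq f lam (M ∘ φ) (y ∘ φ) where
  strictMono := h.strictMono.comp hφ
  isBlock j := (h.isBlock (φ j)).mono_right (h.strictMono.monotone (hφ j.lt_succ_self))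
  le_norm j := h.le_norm (φ j)

lemma exists_isBlockSeq (hlam : ∀ A, lam < blockSup f A) (A : ℕ) :
    ∃ M y, M 0 = A ∧ IsBlockSeq f lam M y := by
  have step : ∀ A, ∃ p : ℕ × E, A < p.1 ∧ IsBlock f A p.1 p.2 ∧ lam ≤ ‖p.2‖ := fun A => by
    obtain ⟨B, y, hy, hlt⟩ := exists_isBlock_lt_norm (hlam A)
    exact ⟨(max B (A + 1), y), by simp, hy.mono_right (le_max_left _ _), hlt.le⟩
  choose next hnext using step
  let M : ℕ → ℕ := fun j => Nat.rec A (fun _ m => (next m).1) j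
  exact ⟨M, fun j => (next (M j)).2, rfl, strictMono_nat_of_lt_succ fun j => (hnext (M j)).1,
    fun j => (hnext (M j)).2.1, fun j => (hnext (M j)).2.2⟩

lemma exists_isBlockSeq_blockSup_le (hC : BlocksBounded f C) {a : ℝ} (ha : 0 < a)
    (hfa : ∀ i, a ≤ ‖f i‖) {η : ℝ} (hη : 0 < η) (hη1 : η < 1) :
    ∃ lam M y, 0 < lam ∧ IsBlockSeq f lam M y ∧ (1 - η) * blockSup f (M 0) ≤ (1 + η) * lam := by
  have hsup : ∀ A, a ≤ blockSup f A :=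
    fun A => (hfa A).trans ((isBlock_single A).norm_le_blockSup hC)
  set r := ⨅ A, blockSup f A
  have hr : ∀ A, r ≤ blockSup f A := ciInf_le ⟨a, Set.forall_mem_range.2 hsup⟩
  have hr0 : 0 < r := ha.trans_le (le_ciInf hsup)
  obtain ⟨N, hN⟩ : ∃ N, blockSup f N < r * (1 + η) := exists_lt_of_ciInf_lt (by nlinarith)
  obtain ⟨M, y, rfl, hy⟩ := exists_isBlockSeq (lam := r * (1 - η))
    (fun A => lt_of_lt_of_le (by nlinarith) (hr A)) N
  exact ⟨r * (1 - η), M, y, by nlinarith, hy, by nlinarith⟩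

lemma norm_sum_smul_le_mul_blockSup (hC : BlocksBounded f C) {y : ℕ → E} (hM : Monotone M)
    (hy : ∀ j, IsBlock f (M j) (M (j + 1)) (y j)) {b : ℝ} (hb : 0 < b) {β : ℕ → ℝ}
    (hβ : ∀ j, |β j| ≤ b) (m : ℕ) :
    ‖∑ j ∈ range m, β j • y j‖ ≤ b * blockSup f (M 0) := by
  have hblock := isBlock_sum hM hy (β := fun j => β j / b)
    (fun j => by rw [abs_div, abs_of_pos hb, div_le_one hb]; exact hβ j) m
  calc ‖∑ j ∈ range m, β j • y j‖ = ‖b • ∑ j ∈ range m, (β j / b) • y j‖ := by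
        simp only [smul_sum, smul_smul, mul_div_cancel₀ _ hb.ne']
    _ ≤ b * blockSup f (M 0) := by
        rw [norm_smul, Real.norm_of_nonneg hb.le]
        gcongr
        exact hblock.norm_le_blockSup hC

lemma IsBlockSeq.isBlock_smul_sum_normalize {y : ℕ → E} (h : IsBlockSeq f lam M y)
    (hlam : 0 < lam) (m : ℕ) :
    IsBlock f (M 0) (M m) (lam • ∑ j ∈ range m, ‖y j‖⁻¹ • y j) := by
  simp only [smul_sum, smul_smul]
  refine isBlock_sum h.strictMono.monotone h.isBlock (fun j => ?_) m
  have hy := hlam.trans_le (h.le_norm j)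
  rw [abs_of_pos (by positivity), ← div_eq_mul_inv, div_le_one hy]
  exact h.le_norm j

lemma IsBlockSeq.norm_sub_smul_sum_le (hC : BlocksBounded f C) {y : ℕ → E}
    (h : IsBlockSeq f lam M y) (hlam : 0 < lam) {t : ℝ} (ht : 1 ≤ 2 * t) {k m : ℕ}
    (hkm : k ≤ m) :
    ‖‖y k‖⁻¹ • y k - t • ∑ j ∈ range (m + 1), ‖y j‖⁻¹ • y j‖ ≤
      t / lam * blockSup f (M 0) := by
  have hsum : ‖y k‖⁻¹ • y k - t • ∑ j ∈ range (m + 1), ‖y j‖⁻¹ • y j =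
      ∑ j ∈ range (m + 1), (((if j = k then 1 else 0) - t) * ‖y j‖⁻¹) • y j := by
    simp only [sub_mul, sub_smul, sum_sub_distrib, smul_sum, smul_smul, ite_mul, one_mul,
      zero_mul, ite_smul, zero_smul, sum_ite_eq', mem_range, Nat.lt_succ_of_le hkm, if_true]
  have ht0 : 0 < t := by linarith
  rw [hsum]
  refine norm_sum_smul_le_mul_blockSup hC h.strictMono.monotone h.isBlock (div_pos ht0 hlam)
    (fun j => ?_) _
  have hcoeff : |(if j = k then 1 else 0) - t| ≤ t := by
    split_ifs <;> rw [abs_le] <;> constructor <;> linarith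
  rw [abs_mul, abs_inv, abs_norm, div_eq_mul_inv]
  exact mul_le_mul hcoeff (inv_anti₀ hlam (h.le_norm j)) (by positivity) ht0.le

end Blocks

lemma Summable.eventually_forall_norm_sum_Ico_lt {G : Type*} [NormedAddCommGroup G]
    [CompleteSpace G] {g : ℕ → G} (hg : Summable g) {ε : ℝ} (hε : 0 < ε) :
    ∀ᶠ A in atTop, ∀ B, ‖∑ i ∈ Ico A B, g i‖ < ε := by
  obtain ⟨s, hs⟩ := summable_iff_vanishing_norm.1 hg ε hε
  obtain ⟨N, hN⟩ := s.exists_nat_subset_range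
  filter_upwards [eventually_ge_atTop N] with A hA B
  refine hs _ (disjoint_left.2 fun i hi his => ?_)
  have := mem_range.1 (hN his)
  simp only [mem_Ico] at hi
  omega

lemma ContinuousLinearMap.exists_norm_le_one_lt_apply {X : Type*} [NormedAddCommGroup X]
    [NormedSpace ℝ X] (φ : X →L[ℝ] ℝ) {r : ℝ} (hr : r < ‖φ‖) : ∃ v, ‖v‖ ≤ 1 ∧ r < φ v := by
  obtain ⟨v, hv, hrv⟩ := φ.exists_lt_apply_of_lt_opNorm hr
  rcases le_total 0 (φ v) with h | h
  · exact ⟨v, hv.le, by rwa [Real.norm_of_nonneg h] at hrv⟩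
  · refine ⟨-v, by rw [norm_neg]; exact hv.le, ?_⟩
    rwa [map_neg, ← Real.norm_of_nonpos h]

section Dual

variable {X : Type*} [NormedAddCommGroup X] [NormedSpace ℝ X] {f : ℕ → X →L[ℝ] ℝ} {C lam : ℝ}
  {M : ℕ → ℕ}

lemma IsBlock.abs_apply_le {A B : ℕ} {y : X →L[ℝ] ℝ} (h : IsBlock f A B y) (v : X) :
    |y v| ≤ ∑ i ∈ Ico A B, |f i v| := by
  obtain ⟨c, hc, rfl⟩ := h
  simp only [_root_.sum_apply, smul_apply, smul_eq_mul]
  refine (abs_sum_le_sum_abs _ _).trans (sum_le_sum fun i _ => ?_)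
  rw [abs_mul]
  exact mul_le_of_le_one_left (abs_nonneg _) (hc i)

lemma BlocksBounded.summable_abs_apply (hC : BlocksBounded f C) (v : X) :
    Summable fun i => |f i v| := by
  refine summable_of_sum_range_le (c := C * ‖v‖) (fun i => abs_nonneg _) fun n => ?_
  have hblock : IsBlock f 0 n (∑ i ∈ Ico 0 n, (SignType.sign (f i v) : ℝ) • f i) :=
    ⟨_, fun i => by rcases SignType.sign (f i v) with _ | _ | _ <;> simp, rfl⟩
  calc ∑ i ∈ range n, |f i v| = (∑ i ∈ Ico 0 n, (SignType.sign (f i v) : ℝ) • f i) v := by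
        simp only [range_eq_Ico, _root_.sum_apply, smul_apply, smul_eq_mul, sign_mul_self]
    _ ≤ ‖∑ i ∈ Ico 0 n, (SignType.sign (f i v) : ℝ) • f i‖ * ‖v‖ :=
        (Real.le_norm_self _).trans (ContinuousLinearMap.le_opNorm _ v)
    _ ≤ C * ‖v‖ := by gcongr; exact hC _ _ _ hblock

lemma BlocksBounded.eventually_forall_isBlock_abs_apply_lt (hC : BlocksBounded f C) (v : X)
    {ε : ℝ} (hε : 0 < ε) : ∀ᶠ A in atTop, ∀ B y, IsBlock f A B y → |y v| < ε := by
  filter_upwards [(hC.summable_abs_apply v).eventually_forall_norm_sum_Ico_lt hε]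
    with A hA B y hy
  exact (hy.abs_apply_le v).trans_lt ((le_abs_self _).trans_lt (hA B))

lemma IsBlockSeq.tendsto_apply (hC : BlocksBounded f C) {y : ℕ → X →L[ℝ] ℝ}
    (h : IsBlockSeq f lam M y) (hlam : 0 < lam) (v : X) :
    Tendsto (fun j => (‖y j‖⁻¹ • y j) v) atTop (𝓝 0) := by
  refine Metric.tendsto_nhds.2 fun ε hε => ?_
  filter_upwards [h.strictMono.tendsto_atTop.eventually
    (hC.eventually_forall_isBlock_abs_apply_lt v (mul_pos hε hlam))] with j hj
  have hy := hlam.trans_le (h.le_norm j)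
  rw [Real.dist_eq, sub_zero, smul_apply, smul_eq_mul, abs_mul, abs_inv, abs_norm,
    inv_mul_lt_iff₀ hy]
  calc |y j v| < ε * lam := hj _ _ (h.isBlock j)
    _ ≤ ‖y j‖ * ε := by rw [mul_comm]; gcongr; exact h.le_norm j

structure IsJamesSeq (u : ℕ → X →L[ℝ] ℝ) (t : ℝ) : Prop where
  norm_eq_one : ∀ k, ‖u k‖ = 1
  tendsto_apply : ∀ v, Tendsto (fun k => u k v) atTop (𝓝 0)
  norm_sub_smul_sum_le : ∀ k m, k ≤ m → ‖u k - t • ∑ j ∈ range (m + 1), u j‖ ≤ 1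

lemma IsBlockSeq.isJamesSeq (hC : BlocksBounded f C) {y : ℕ → X →L[ℝ] ℝ}
    (h : IsBlockSeq f lam M y) (hlam : 0 < lam) (h2 : blockSup f (M 0) ≤ 2 * lam) :
    IsJamesSeq (fun j => ‖y j‖⁻¹ • y j) (lam / blockSup f (M 0)) := by
  have hy : ∀ j, 0 < ‖y j‖ := fun j => hlam.trans_le (h.le_norm j)
  have hsup : 0 < blockSup f (M 0) := (hy 0).trans_le ((h.isBlock 0).norm_le_blockSup hC)
  refine ⟨fun k => norm_smul_inv_norm (norm_pos_iff.1 (hy k)), h.tendsto_apply hC hlam,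
    fun k m hkm => ?_⟩
  refine (h.norm_sub_smul_sum_le hC hlam ?_ hkm).trans_eq ?_
  · rw [mul_div_assoc', le_div_iff₀ hsup]
    linarith
  · field_simp

lemma IsBlockSeq.exists_subseq_le_sum_apply (hC : BlocksBounded f C) {y : ℕ → X →L[ℝ] ℝ}
    (h : IsBlockSeq f lam M y) (hlam : 0 < lam) {η : ℝ} (hη : 0 < η) :
    ∃ φ : ℕ → ℕ, StrictMono φ ∧ φ 0 = 0 ∧ ∃ v₀ : X, ‖v₀‖ ≤ 1 ∧
      ∀ m, 1 - 2 * η ≤ (∑ j ∈ range (m + 1), ‖y (φ j)‖⁻¹ • y (φ j)) v₀ := by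
  have hy0 : 0 < ‖y 0‖ := hlam.trans_le (h.le_norm 0)
  obtain ⟨v₀, hv₀, hyv₀⟩ := (y 0).exists_norm_le_one_lt_apply
    (r := (1 - η) * ‖y 0‖) (by nlinarith)
  obtain ⟨A₀, hA₀⟩ :=
    (hC.eventually_forall_isBlock_abs_apply_lt v₀ (mul_pos hη hlam)).exists_forall_of_atTop
  -- keep the first block and drop those that may start before `A₀`
  let φ : ℕ → ℕ := fun j => if j = 0 then 0 else j + A₀
  have hφ : StrictMono φ := strictMono_nat_of_lt_succ fun j => by
    by_cases hj : j = 0 <;> simp [φ, hj]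
  refine ⟨φ, hφ, rfl, v₀, hv₀, fun m => ?_⟩
  have htail := ((h.comp hφ).comp (φ := (· + 1)) (strictMono_id.add_const 1))
    |>.isBlock_smul_sum_normalize hlam m
  have hsmall := hA₀ _ ((Nat.le_add_left A₀ 1).trans (h.strictMono.id_le _)) _ _ htail
  set S := ∑ j ∈ range m, ‖y (φ (j + 1))‖⁻¹ • y (φ (j + 1))
  have hS : |S v₀| < η := by
    have : |lam * S v₀| < η * lam := by
      simpa only [smul_apply, smul_eq_mul, Function.comp_apply] using hsmall
    rw [abs_mul, abs_of_pos hlam, mul_comm] at this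
    exact lt_of_mul_lt_mul_right this hlam.le
  have h0 : 1 - η < (‖y 0‖⁻¹ • y 0) v₀ := by
    rw [smul_apply, smul_eq_mul, lt_inv_mul_iff₀ hy0]
    linarith
  rw [sum_range_succ', add_apply]
  change 1 - 2 * η ≤ S v₀ + (‖y 0‖⁻¹ • y 0) v₀
  linarith [abs_lt.1 hS]

lemma IsJamesSeq.exists_weakDual_clusterPt {u : ℕ → X →L[ℝ] ℝ} {t : ℝ} (hu : IsJamesSeq u t)
    (ht : 0 < t) : ∃ w : X →L[ℝ] ℝ, (∀ k, ‖u k - t • w‖ ≤ 1) ∧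
      ∀ v c, (∀ m, c ≤ (∑ j ∈ range (m + 1), u j) v) → c ≤ w v := by
  set z := fun m => ∑ j ∈ range (m + 1), u j
  have hz : ∀ m, ‖z m‖ ≤ 2 / t := fun m => by
    rw [le_div_iff₀' ht, ← Real.norm_of_nonneg ht.le, ← norm_smul]
    calc ‖t • z m‖ = ‖u 0 - (u 0 - t • z m)‖ := by rw [sub_sub_cancel]
      _ ≤ ‖u 0‖ + ‖u 0 - t • z m‖ := norm_sub_le _ _
      _ ≤ 2 := by linarith [hu.norm_eq_one 0, hu.norm_sub_smul_sum_le 0 m m.zero_le]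
  obtain ⟨w, -, hw⟩ :=
    (WeakDual.isCompact_closedBall (0 : StrongDual ℝ X) (2 / t)).exists_mapClusterPt
      (f := atTop) (u := fun m => StrongDual.toWeakDual (z m))
      (tendsto_principal.2 (Eventually.of_forall fun m => by simpa using hz m))
  refine ⟨WeakDual.toStrongDual w, fun k => ?_, fun v c hc => ?_⟩
  · have hclosed : IsClosed {x : WeakDual ℝ X | ‖u k - t • WeakDual.toStrongDual x‖ ≤ 1} := by
      have := (WeakDual.isClosed_closedBall (0 : StrongDual ℝ X) 1).preimage
        (continuous_const.sub (continuous_const_smul t) :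
          Continuous fun x : WeakDual ℝ X => StrongDual.toWeakDual (u k) - t • x)
      convert this using 1
      ext x
      simp
    exact hclosed.mem_of_mapClusterPt hw ((eventually_ge_atTop k).mono fun m hm => by
      simpa using hu.norm_sub_smul_sum_le k m hm)
  · exact (isClosed_le continuous_const (WeakDual.eval_continuous v)).mem_of_mapClusterPt hw
      (Eventually.of_forall hc)

end Dual

theorem not_propertyKStar_of_blocksBounded {X : Type*} [NormedAddCommGroup X]
    [NormedSpace ℝ X] {f : ℕ → X →L[ℝ] ℝ} {C : ℝ} (hC : BlocksBounded f C)
    {a : ℝ} (ha : 0 < a) (hfa : ∀ i, a ≤ ‖f i‖) : ¬ PropertyKStar X := by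
  rintro ⟨K, hK0, hK1, hK⟩
  set η := (1 - K) / 10 with hη_def
  have hη : 0 < η := by positivity
  have hη1 : η ≤ 1 / 10 := by linarith
  obtain ⟨lam, M, y, hlam, hy, hsup⟩ :=
    exists_isBlockSeq_blockSup_le hC ha hfa hη (by linarith)
  obtain ⟨φ, hφ, hφ0, v₀, hv₀, hsum⟩ := hy.exists_subseq_le_sum_apply hC hlam hη
  have hsup0 : 0 < blockSup f (M 0) :=
    hlam.trans_le ((hy.le_norm 0).trans ((hy.isBlock 0).norm_le_blockSup hC))
  have hJ := (hy.comp hφ).isJamesSeq hC hlam (by simp only [Function.comp_apply, hφ0]; nlinarith)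
  simp only [Function.comp_apply, hφ0] at hJ
  set t := lam / blockSup f (M 0)
  have ht : 0 < t := div_pos hlam hsup0
  have ht' : 1 - η ≤ t * (1 + η) := by
    rw [div_mul_eq_mul_div, le_div_iff₀ hsup0]
    linarith
  obtain ⟨w, hw, hwv⟩ := hJ.exists_weakDual_clusterPt ht
  have hKw := hK _ (t • w) (fun k => (hJ.norm_eq_one k).le) hJ.tendsto_apply
    (by simp only [hJ.norm_eq_one, tendsto_const_nhds])
    (liminf_le_of_frequently_le (Frequently.of_forall hw)
      (isBoundedUnder_of ⟨0, fun k => norm_nonneg _⟩))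
  have htw : t * (1 - 2 * η) ≤ K := calc
    t * (1 - 2 * η) ≤ t * ‖w‖ := by
      gcongr
      calc 1 - 2 * η ≤ w v₀ := hwv v₀ _ hsum
        _ ≤ ‖w‖ := (Real.le_norm_self _).trans (w.le_of_opNorm_le le_rfl v₀ |>.trans
          (mul_le_of_le_one_right (norm_nonneg w) hv₀))
    _ = ‖t • w‖ := by rw [norm_smul, Real.norm_of_nonneg ht.le]
    _ ≤ K := hKw
  nlinarith [mul_le_mul_of_nonneg_right ht' (by linarith : (0 : ℝ) ≤ 1 - 2 * η),
    mul_le_mul_of_nonneg_right htw (by linarith : (0 : ℝ) ≤ 1 + η)]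

def c0Basis (n : ℕ) : C₀(ℕ, ℝ) :=
  ⟨⟨Pi.single n 1, continuous_of_discreteTopology⟩, by
    rw [cocompact_eq_cofinite]
    exact tendsto_const_nhds.congr' ((eventually_cofinite_ne n).mono fun i hi => by simp [hi])⟩

lemma norm_sum_smul_c0Basis_le (s : Finset ℕ) {c : ℕ → ℝ} (hc : ∀ i, |c i| ≤ 1) :
    ‖∑ i ∈ s, c i • c0Basis i‖ ≤ 1 := by
  rw [← ZeroAtInftyContinuousMap.norm_toBCF_eq_norm,
    BoundedContinuousFunction.norm_le zero_le_one]
  intro n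
  change ‖(∑ i ∈ s, c i • c0Basis i) n‖ ≤ 1
  have heval : (∑ i ∈ s, c i • c0Basis i) n = ∑ i ∈ s, (c i • c0Basis i) n :=
    map_sum (⟨⟨fun g : C₀(ℕ, ℝ) => g n, rfl⟩, fun _ _ => rfl⟩ : C₀(ℕ, ℝ) →+ ℝ) _ s
  rw [heval]
  simp only [ZeroAtInftyContinuousMap.smul_apply, c0Basis, ZeroAtInftyContinuousMap.coe_mk,
    smul_eq_mul, Pi.single_apply, mul_ite, mul_one, mul_zero, sum_ite_eq]
  split_ifs
  exacts [hc n, by simp]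

lemma one_le_norm_c0Basis (n : ℕ) : 1 ≤ ‖c0Basis n‖ := by
  rw [← ZeroAtInftyContinuousMap.norm_toBCF_eq_norm]
  simpa [c0Basis] using (c0Basis n).toBCF.norm_coe_le_norm n

theorem stmt13_general (X : Type*) [NormedAddCommGroup X] [NormedSpace ℝ X]
    (hK : PropertyKStar X) :
    ¬ ∃ S : Submodule ℝ (X →L[ℝ] ℝ), IsClosed (S : Set (X →L[ℝ] ℝ)) ∧
      Nonempty (C₀(ℕ, ℝ) ≃L[ℝ] S) := by
  rintro ⟨S, -, ⟨e⟩⟩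
  let J : C₀(ℕ, ℝ) →L[ℝ] (X →L[ℝ] ℝ) := S.subtypeL ∘L (e : C₀(ℕ, ℝ) →L[ℝ] S)
  -- continuity of `e.symm` at `0` bounds `‖J (c0Basis n)‖` below, as `‖c0Basis n‖ ≥ 1`
  obtain ⟨δ, hδ, he⟩ :=
    Metric.continuousAt_iff.1 (e.symm.continuous.continuousAt (x := 0)) 1 one_pos
  refine not_propertyKStar_of_blocksBounded (f := fun n => J (c0Basis n)) (C := ‖J‖) ?_ hδ
    (fun n => le_of_not_gt fun h => (one_le_norm_c0Basis n).not_gt ?_) hK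
  · rintro A B y ⟨c, hc, rfl⟩
    simpa [map_sum, map_smul] using J.le_opNorm_of_le (norm_sum_smul_c0Basis_le _ hc)
  · have h1 := he (x := e (c0Basis n))
      (by rw [Subtype.dist_eq, ZeroMemClass.coe_zero, dist_zero_right]; exact h)
    rwa [map_zero, dist_zero_right, e.symm_apply_apply] at h1

theorem stmt13 (X : Type*) [NormedAddCommGroup X] [NormedSpace ℝ X] [CompleteSpace X]
    (hK : PropertyKStar X) :
    ¬ ∃ S : Submodule ℝ (X →L[ℝ] ℝ), IsClosed (S : Set (X →L[ℝ] ℝ)) ∧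
      Nonempty (C₀(ℕ, ℝ) ≃L[ℝ] S) :=
  stmt13_general X hK
end
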